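/- arXiv:1909.03217 — 6 statements merged into one kernel-verified Lean document; each statement's English description precedes it below -/
import Mathlib

section
/- (Quantitative core of Lemma 5.1 and of the proofs of Corollaries 2 and 4: lower bound on the size of the most informative subgraph.) Let V be a finite set with |V| = n ≥ 2, let p_{ij} (i ≠ j ∈ V, symmetric) satisfy 0 < p_min ≤ p_{ij} ≤ p_max, let C ⊆ V with |C| = r, where 2 ≤ r < n, and set E_0[e(D)] = Σ_{i<j∈D} p_{ij} for D ⊆ V. Let m be a real number with 1 ≤ m < n such that (m − 1)·p_max·log(n/r) < (r − 1)·p_min·log(n/m). Then every nonempty D* ⊆ C maximizing the function D ↦ E_0[e(D)]/(|D|·log(n/|D|)) over nonempty subsets D of C satisfies |D*| > m. (Taking rank-1 probabilities p_{ij} = θ_iθ_j and m = r^{1/3} recovers Lemma 5.1.) -/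
/-!
Compare the objective at `C` with its value at a maximizer `D*` of size `d`. Bounding every edge
probability below by `p_min` on `C` and above by `p_max` on `D*`, the objective at `C` is at least
`(r-1) p_min / (2 log(n/r))` and at `D*` at most `(d-1) p_max / (2 log(n/d))`, so maximality gives
`(r-1) p_min log(n/d) ≤ (d-1) p_max log(n/r)`. If `d ≤ m`, then `log(n/m) ≤ log(n/d)` and
`d - 1 ≤ m - 1` turn this into the negation of the hypothesis on `m`.
-/

open Finset

namespace MostInformativeSubgraph

/-- `E₀[e(D)] = Σ_{i<j ∈ D} p_{ij}`, written for a symmetric `p` on an arbitrary finite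
vertex set as half the sum over ordered pairs of distinct vertices of `D`. -/
noncomputable def expCount {V : Type*} [DecidableEq V] (p : V → V → ℝ) (D : Finset V) : ℝ :=
  (∑ q ∈ D.offDiag, p q.1 q.2) / 2

section

theorem mul_div_two_div_mul_cancel_left {K : Type*} [Field K] {d : K} (x L : K) (hd : d ≠ 0) :
    d * x / 2 / (d * L) = x / (2 * L) := by
  rw [div_div, mul_left_comm 2, mul_div_mul_left _ _ hd]

variable {V : Type*}

theorem cast_card_offDiag {R : Type*} [Ring R] (D : Finset V) :
    (D.offDiag.card : R) = (D.card : R) * ((D.card : R) - 1) := by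
  rw [offDiag_card, Nat.cast_sub (Nat.le_mul_self _), Nat.cast_mul, mul_sub_one]

variable [DecidableEq V]

noncomputable def score (p : V → V → ℝ) (n : ℝ) (D : Finset V) : ℝ :=
  expCount p D / ((D.card : ℝ) * Real.log (n / (D.card : ℝ)))

theorem card_mul_card_sub_one_mul_le_expCount {p : V → V → ℝ} {a : ℝ} {D : Finset V}
    (h : ∀ i ∈ D, ∀ j ∈ D, i ≠ j → a ≤ p i j) :
    (D.card : ℝ) * ((D.card : ℝ) - 1) * a / 2 ≤ expCount p D := by
  have hsum : D.offDiag.card • a ≤ ∑ q ∈ D.offDiag, p q.1 q.2 :=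
    card_nsmul_le_sum _ _ _ fun q hq ↦ by
      obtain ⟨hi, hj, hij⟩ := mem_offDiag.mp hq
      exact h _ hi _ hj hij
  rw [nsmul_eq_mul, cast_card_offDiag] at hsum
  unfold expCount
  linarith

theorem expCount_le_card_mul_card_sub_one_mul {p : V → V → ℝ} {b : ℝ} {D : Finset V}
    (h : ∀ i ∈ D, ∀ j ∈ D, i ≠ j → p i j ≤ b) :
    expCount p D ≤ (D.card : ℝ) * ((D.card : ℝ) - 1) * b / 2 := by
  have hsum : ∑ q ∈ D.offDiag, p q.1 q.2 ≤ D.offDiag.card • b :=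
    sum_le_card_nsmul _ _ _ fun q hq ↦ by
      obtain ⟨hi, hj, hij⟩ := mem_offDiag.mp hq
      exact h _ hi _ hj hij
  rw [nsmul_eq_mul, cast_card_offDiag] at hsum
  unfold expCount
  linarith

theorem div_le_score {p : V → V → ℝ} {n a : ℝ} {D : Finset V} (hD : D.Nonempty)
    (hDn : (D.card : ℝ) ≤ n) (h : ∀ i ∈ D, ∀ j ∈ D, i ≠ j → a ≤ p i j) :
    ((D.card : ℝ) - 1) * a / (2 * Real.log (n / D.card)) ≤ score p n D := by
  have hd : (0 : ℝ) < D.card := by exact_mod_cast hD.card_pos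
  have hL : 0 ≤ Real.log (n / D.card) := Real.log_nonneg ((one_le_div hd).2 hDn)
  have key := div_le_div_of_nonneg_right (card_mul_card_sub_one_mul_le_expCount h)
    (mul_nonneg hd.le hL)
  rwa [mul_assoc, mul_div_two_div_mul_cancel_left _ _ hd.ne'] at key

theorem score_le_div {p : V → V → ℝ} {n b : ℝ} {D : Finset V} (hD : D.Nonempty)
    (hDn : (D.card : ℝ) ≤ n) (h : ∀ i ∈ D, ∀ j ∈ D, i ≠ j → p i j ≤ b) :
    score p n D ≤ ((D.card : ℝ) - 1) * b / (2 * Real.log (n / D.card)) := by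
  have hd : (0 : ℝ) < D.card := by exact_mod_cast hD.card_pos
  have hL : 0 ≤ Real.log (n / D.card) := Real.log_nonneg ((one_le_div hd).2 hDn)
  have key := div_le_div_of_nonneg_right (expCount_le_card_mul_card_sub_one_mul h)
    (mul_nonneg hd.le hL)
  rwa [mul_assoc, mul_div_two_div_mul_cancel_left _ _ hd.ne'] at key

theorem sub_one_mul_mul_log_le_of_score_le {p : V → V → ℝ} {n a b : ℝ} {C D : Finset V}
    (hD : D.Nonempty) (hDC : D.card ≤ C.card) (hCn : (C.card : ℝ) < n)
    (ha : ∀ i ∈ C, ∀ j ∈ C, i ≠ j → a ≤ p i j) (hb : ∀ i ∈ D, ∀ j ∈ D, i ≠ j → p i j ≤ b)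
    (hle : score p n C ≤ score p n D) :
    ((C.card : ℝ) - 1) * a * Real.log (n / D.card) ≤
      ((D.card : ℝ) - 1) * b * Real.log (n / C.card) := by
  have hd : (0 : ℝ) < D.card := by exact_mod_cast hD.card_pos
  have hdc : (D.card : ℝ) ≤ C.card := by exact_mod_cast hDC
  have hLC : 0 < Real.log (n / C.card) :=
    Real.log_pos ((one_lt_div (hd.trans_le hdc)).2 hCn)
  have hLD : 0 < Real.log (n / D.card) := Real.log_pos ((one_lt_div hd).2 (by linarith))
  have hC : C.Nonempty := card_pos.mp (hD.card_pos.trans_le hDC)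
  have h := ((div_le_score hC hCn.le ha).trans hle).trans (score_le_div hD (by linarith) hb)
  rw [div_le_div_iff₀ (by positivity) (by positivity)] at h
  linarith

end

theorem card_maximizer_gt_general {V : Type*} [DecidableEq V] (n : ℕ)
    (p : V → V → ℝ) (pmin pmax : ℝ)
    (hbound : ∀ i j : V, i ≠ j → pmin ≤ p i j ∧ p i j ≤ pmax)
    (hpmin : 0 < pmin)
    (r : ℕ) (C : Finset V) (hC : C.card = r) (hr2 : 2 ≤ r) (hrn : r < n)
    (m : ℝ)
    (hkey : (m - 1) * pmax * Real.log ((n : ℝ) / (r : ℝ)) <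
      ((r : ℝ) - 1) * pmin * Real.log ((n : ℝ) / m))
    (Dstar : Finset V) (hDC : Dstar ⊆ C) (hDne : Dstar.Nonempty)
    (hmax : ∀ D : Finset V, D ⊆ C → D.Nonempty →
      expCount p D / ((D.card : ℝ) * Real.log ((n : ℝ) / (D.card : ℝ))) ≤
        expCount p Dstar / ((Dstar.card : ℝ) * Real.log ((n : ℝ) / (Dstar.card : ℝ)))) :
    m < (Dstar.card : ℝ) := by
  by_contra! hdm
  have hCne : C.Nonempty := card_pos.mp (by omega)
  have hcross := sub_one_mul_mul_log_le_of_score_le hDne (card_le_card hDC)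
    (by rw [hC]; exact_mod_cast hrn) (fun i _ j _ hij ↦ (hbound i j hij).1)
    (fun i _ j _ hij ↦ (hbound i j hij).2) (hmax C subset_rfl hCne)
  rw [hC] at hcross
  have hpmax : pmin ≤ pmax := by
    obtain ⟨i, -, j, -, hij⟩ := one_lt_card.mp (show 1 < C.card by omega)
    exact (hbound i j hij).1.trans (hbound i j hij).2
  have hr1 : (1 : ℝ) ≤ r := by exact_mod_cast hr2.trans' one_le_two
  have hd : (0 : ℝ) < Dstar.card := by exact_mod_cast hDne.card_pos
  have hLm : Real.log (n / m) ≤ Real.log (n / Dstar.card) :=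
    Real.log_le_log (div_pos (by exact_mod_cast hrn.pos) (by linarith)) (by gcongr)
  have : (m - 1) * pmax * Real.log (n / r) < (m - 1) * pmax * Real.log (n / r) :=
    calc (m - 1) * pmax * Real.log (n / r)
        < ((r : ℝ) - 1) * pmin * Real.log (n / m) := hkey
      _ ≤ ((r : ℝ) - 1) * pmin * Real.log (n / Dstar.card) :=
        mul_le_mul_of_nonneg_left hLm (mul_nonneg (by linarith) hpmin.le)
      _ ≤ ((Dstar.card : ℝ) - 1) * pmax * Real.log (n / r) := hcross
      _ ≤ (m - 1) * pmax * Real.log (n / r) := by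
        gcongr
        · exact Real.log_nonneg ((one_le_div (by linarith)).2 (by exact_mod_cast hrn.le))
        · linarith
  exact lt_irrefl _ this

/-- **Quantitative core of Lemma 5.1 / Corollaries 2 and 4.** If
`(m-1)·p_max·log(n/r) < (r-1)·p_min·log(n/m)`, then every nonempty `D* ⊆ C` maximizing
`D ↦ E₀[e(D)]/(|D| log(n/|D|))` over nonempty subsets of `C` satisfies `|D*| > m`. -/
theorem card_maximizer_gt {V : Type*} [Fintype V] [DecidableEq V] (n : ℕ)
    (hn : Fintype.card V = n) (hn2 : 2 ≤ n)
    (p : V → V → ℝ) (pmin pmax : ℝ)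
    (hsymm : ∀ i j : V, p i j = p j i)
    (hbound : ∀ i j : V, i ≠ j → pmin ≤ p i j ∧ p i j ≤ pmax)
    (hpmin : 0 < pmin)
    (r : ℕ) (C : Finset V) (hC : C.card = r) (hr2 : 2 ≤ r) (hrn : r < n)
    (m : ℝ) (hm1 : 1 ≤ m) (hmn : m < n)
    (hkey : (m - 1) * pmax * Real.log ((n : ℝ) / (r : ℝ)) <
      ((r : ℝ) - 1) * pmin * Real.log ((n : ℝ) / m))
    (Dstar : Finset V) (hDC : Dstar ⊆ C) (hDne : Dstar.Nonempty)
    (hmax : ∀ D : Finset V, D ⊆ C → D.Nonempty →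
      expCount p D / ((D.card : ℝ) * Real.log ((n : ℝ) / (D.card : ℝ))) ≤
        expCount p Dstar / ((Dstar.card : ℝ) * Real.log ((n : ℝ) / (Dstar.card : ℝ)))) :
    m < (Dstar.card : ℝ) :=
  card_maximizer_gt_general n p pmin pmax hbound hpmin r C hC hr2 hrn m hkey Dstar hDC hDne hmax

end MostInformativeSubgraph
end

section
/- (Weight inhomogeneity inequality, used in the proof of Lemma 5.2.) Let D be a nonempty finite set and θ : D → ℝ with 0 < a ≤ θ_i ≤ b for all i ∈ D. Then (Σ_{i∈D} θ_i²)/(Σ_{i∈D} θ_i)² ≤ (a + b)²/(4·|D|·a·b). -/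
/-!
Each weight satisfies `(θ_i - a)(b - θ_i) ≥ 0`, i.e. `θ_i² ≤ (a + b) θ_i - ab`; summing gives
`Σ θ_i² ≤ (a + b) S - nab` with `S = Σ θ_i` and `n = |D|`. The theorem then reduces to
`4nab ((a + b) S - nab) ≤ (a + b)² S²`, which is AM-GM: the difference is `((a + b) S - 2nab)²`.
-/

open Finset

section
variable {R ι : Type*} [CommRing R] [LinearOrder R] [IsStrictOrderedRing R]

theorem sq_le_add_mul_sub_mul_of_mem_Icc {a b x : R} (hax : a ≤ x) (hxb : x ≤ b) :
    x ^ 2 ≤ (a + b) * x - a * b := by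
  nlinarith [mul_nonneg (sub_nonneg.2 hax) (sub_nonneg.2 hxb)]

theorem sum_sq_le_of_mem_Icc {s : Finset ι} {f : ι → R} {a b : R}
    (ha : ∀ i ∈ s, a ≤ f i) (hb : ∀ i ∈ s, f i ≤ b) :
    ∑ i ∈ s, f i ^ 2 ≤ (a + b) * ∑ i ∈ s, f i - #s * a * b := by
  calc ∑ i ∈ s, f i ^ 2 ≤ ∑ i ∈ s, ((a + b) * f i - a * b) :=
        sum_le_sum fun i hi => sq_le_add_mul_sub_mul_of_mem_Icc (ha i hi) (hb i hi)
    _ = (a + b) * ∑ i ∈ s, f i - #s * a * b := by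
        rw [sum_sub_distrib, ← mul_sum, sum_const, nsmul_eq_mul, mul_assoc]

theorem four_mul_card_mul_sum_sq_le_of_mem_Icc {s : Finset ι} {f : ι → R} {a b : R}
    (ha₀ : 0 ≤ a) (ha : ∀ i ∈ s, a ≤ f i) (hb : ∀ i ∈ s, f i ≤ b) :
    4 * #s * a * b * ∑ i ∈ s, f i ^ 2 ≤ (a + b) ^ 2 * (∑ i ∈ s, f i) ^ 2 := by
  have hnab : 0 ≤ (#s : R) * a * b := by
    rcases s.eq_empty_or_nonempty with rfl | ⟨i, hi⟩
    · simp
    · have hb₀ : 0 ≤ b := ha₀.trans ((ha i hi).trans (hb i hi))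
      positivity
  set S := ∑ i ∈ s, f i
  calc 4 * #s * a * b * ∑ i ∈ s, f i ^ 2
      ≤ 4 * (#s * a * b) * ((a + b) * S - #s * a * b) := by
        rw [show (4 : R) * #s * a * b = 4 * (#s * a * b) by ring]
        gcongr
        exact sum_sq_le_of_mem_Icc ha hb
    _ ≤ (a + b) ^ 2 * S ^ 2 := by nlinarith [sq_nonneg ((a + b) * S - 2 * (#s * a * b))]

end

/-- **Weight inhomogeneity inequality** (used in the proof of Lemma 5.2). For weights
`0 < a ≤ θ_i ≤ b` on a nonempty finite set `D`,
`(Σ θ_i²)/(Σ θ_i)² ≤ (a+b)²/(4|D|ab)`. -/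
theorem weight_inhomogeneity {D : Type*} [Fintype D] [Nonempty D]
    (θ : D → ℝ) (a b : ℝ) (ha : 0 < a)
    (hθa : ∀ i, a ≤ θ i) (hθb : ∀ i, θ i ≤ b) :
    (∑ i, (θ i)^2) / (∑ i, θ i)^2 ≤ (a + b)^2 / (4 * (Fintype.card D : ℝ) * a * b) := by
  have hb : 0 < b := ha.trans_le ((hθa (Classical.arbitrary D)).trans (hθb _))
  have hS : 0 < ∑ i, θ i := sum_pos (fun i _ => ha.trans_le (hθa i)) univ_nonempty
  rw [div_le_div_iff₀ (by positivity) (by positivity), mul_comm]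
  exact four_mul_card_mul_sum_sq_le_of_mem_Icc ha.le (fun i _ => hθa i) (fun i _ => hθb i)
end

section
/- (Multiplicative bounds for the entropy function h.) For all real t ≥ 1 and x ≥ 0, one has √t·h(x) ≤ h(t·x) ≤ t²·h(x), where h(x) = (x+1)·log(x+1) − x. -/
/-- The entropy function `h(x) = (x+1)log(x+1) - x`. -/
noncomputable def hFun (x : ℝ) : ℝ := (x + 1) * Real.log (x + 1) - x

lemma hasDerivAt_hFun {x : ℝ} (hx : -1 < x) :
    HasDerivAt hFun (Real.log (x + 1)) x := by
  have h1 : x + 1 ≠ 0 := by linarith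
  have hadd : HasDerivAt (fun y : ℝ => y + 1) 1 x := (hasDerivAt_id x).add_const 1
  have hlog : HasDerivAt (fun y : ℝ => Real.log (y + 1)) ((x + 1)⁻¹) x := by
    simpa [Function.comp_def] using (Real.hasDerivAt_log h1).comp x hadd
  have hmul := hadd.mul hlog
  have := hmul.sub (hasDerivAt_id x)
  convert this using 1
  · rfl
  · rfl
  · rfl
  · simp [h1]

lemma continuous_hFun : Continuous hFun := by
  unfold hFun
  fun_prop

lemma hFun_nonneg {x : ℝ} (hx : 0 ≤ x) : 0 ≤ hFun x := by
  have h1 : (0:ℝ) < x + 1 := by linarith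
  have hlog : 1 - (x + 1)⁻¹ ≤ Real.log (x + 1) := by
    have := Real.log_le_sub_one_of_pos (x := (x + 1)⁻¹) (by positivity)
    rw [Real.log_inv] at this
    linarith
  have : x / (x + 1) ≤ Real.log (x + 1) := by
    rw [div_eq_mul_inv]
    have : 1 - (x + 1)⁻¹ = x * (x + 1)⁻¹ := by field_simp; ring
    linarith [this ▸ hlog]
  have hmul : x ≤ (x + 1) * Real.log (x + 1) := by
    have := mul_le_mul_of_nonneg_left this (le_of_lt h1)
    rwa [mul_div_cancel₀ x (ne_of_gt h1)] at this
  unfold hFun; linarith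

lemma hFun_lower {t : ℝ} (ht : 1 ≤ t) {x : ℝ} (hx : 0 ≤ x) :
    t * hFun x ≤ hFun (t * x) := by
  set f : ℝ → ℝ := fun y => hFun (t * y) - t * hFun y with hf
  have ht0 : (0:ℝ) < t := by linarith
  have hmono : MonotoneOn f (Set.Ici 0) := by
    apply monotoneOn_of_deriv_nonneg (convex_Ici 0)
    · exact ((continuous_hFun.comp (continuous_const.mul continuous_id)).sub
        (continuous_const.mul continuous_hFun)).continuousOn
    · intro y hy
      rw [interior_Ici] at hy
      have hy0 : (0:ℝ) < y := hy
      have h1 : HasDerivAt (fun z => hFun (t * z)) (Real.log (t * y + 1) * t) y := by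
        have := (hasDerivAt_hFun (x := t * y) (by nlinarith)).comp y
          ((hasDerivAt_id y).const_mul t)
        simpa [mul_comm, Function.comp_def] using this
      have h2 : HasDerivAt (fun z => t * hFun z) (t * Real.log (y + 1)) y :=
        (hasDerivAt_hFun (by linarith)).const_mul t
      exact (h1.sub h2).differentiableAt.differentiableWithinAt
    · intro y hy
      rw [interior_Ici] at hy
      have hy0 : (0:ℝ) < y := hy
      have h1 : HasDerivAt (fun z => hFun (t * z)) (Real.log (t * y + 1) * t) y := by
        have := (hasDerivAt_hFun (x := t * y) (by nlinarith)).comp y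
          ((hasDerivAt_id y).const_mul t)
        simpa [mul_comm, Function.comp_def] using this
      have h2 : HasDerivAt (fun z => t * hFun z) (t * Real.log (y + 1)) y :=
        (hasDerivAt_hFun (by linarith)).const_mul t
      have hd : deriv f y = Real.log (t * y + 1) * t - t * Real.log (y + 1) :=
        (h1.sub h2).deriv
      rw [hd]
      have hlog : Real.log (y + 1) ≤ Real.log (t * y + 1) := by
        apply Real.log_le_log (by linarith)
        nlinarith
      nlinarith
  have h0 : f 0 ≤ f x := hmono (Set.self_mem_Ici) hx hx
  have hf0 : f 0 = 0 := by simp [hf, hFun]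
  have := hf0 ▸ h0
  simp only [hf] at this
  linarith

lemma hFun_upper {t : ℝ} (ht : 1 ≤ t) {x : ℝ} (hx : 0 ≤ x) :
    hFun (t * x) ≤ t ^ 2 * hFun x := by
  set f : ℝ → ℝ := fun y => t ^ 2 * hFun y - hFun (t * y) with hf
  have ht0 : (0:ℝ) < t := by linarith
  have hmono : MonotoneOn f (Set.Ici 0) := by
    apply monotoneOn_of_deriv_nonneg (convex_Ici 0)
    · exact ((continuous_const.mul continuous_hFun).sub
        (continuous_hFun.comp (continuous_const.mul continuous_id))).continuousOn
    · intro y hy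
      rw [interior_Ici] at hy
      have hy0 : (0:ℝ) < y := hy
      have h1 : HasDerivAt (fun z => hFun (t * z)) (Real.log (t * y + 1) * t) y := by
        have := (hasDerivAt_hFun (x := t * y) (by nlinarith)).comp y
          ((hasDerivAt_id y).const_mul t)
        simpa [mul_comm, Function.comp_def] using this
      have h2 : HasDerivAt (fun z => t ^ 2 * hFun z) (t ^ 2 * Real.log (y + 1)) y :=
        (hasDerivAt_hFun (by linarith)).const_mul (t ^ 2)
      exact (h2.sub h1).differentiableAt.differentiableWithinAt
    · intro y hy
      rw [interior_Ici] at hy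
      have hy0 : (0:ℝ) < y := hy
      have h1 : HasDerivAt (fun z => hFun (t * z)) (Real.log (t * y + 1) * t) y := by
        have := (hasDerivAt_hFun (x := t * y) (by nlinarith)).comp y
          ((hasDerivAt_id y).const_mul t)
        simpa [mul_comm, Function.comp_def] using this
      have h2 : HasDerivAt (fun z => t ^ 2 * hFun z) (t ^ 2 * Real.log (y + 1)) y :=
        (hasDerivAt_hFun (by linarith)).const_mul (t ^ 2)
      have hd : deriv f y = t ^ 2 * Real.log (y + 1) - Real.log (t * y + 1) * t :=
        (h2.sub h1).deriv
      rw [hd]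
      -- Bernoulli: 1 + t*y ≤ (1+y)^t, hence log(1+t*y) ≤ t * log(1+y)
      have hbern : 1 + t * y ≤ (1 + y) ^ t :=
        one_add_mul_self_le_rpow_one_add (by linarith) ht
      have hlog : Real.log (t * y + 1) ≤ t * Real.log (y + 1) := by
        have h1y : (0:ℝ) < 1 + y := by linarith
        calc Real.log (t * y + 1) ≤ Real.log ((1 + y) ^ t) := by
              apply Real.log_le_log (by nlinarith)
              linarith [hbern]
          _ = t * Real.log (1 + y) := Real.log_rpow h1y t
          _ = t * Real.log (y + 1) := by rw [add_comm]
      nlinarith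
  have h0 : f 0 ≤ f x := hmono (Set.self_mem_Ici) hx hx
  have hf0 : f 0 = 0 := by simp [hf, hFun]
  have := hf0 ▸ h0
  simp only [hf] at this
  linarith

/-- **Multiplicative bounds for the entropy function `h`:** for `t ≥ 1` and `x ≥ 0`,
`√t · h(x) ≤ h(t·x) ≤ t² · h(x)`. -/
theorem hFun_mul_bounds (t x : ℝ) (ht : 1 ≤ t) (hx : 0 ≤ x) :
    Real.sqrt t * hFun x ≤ hFun (t * x) ∧ hFun (t * x) ≤ t^2 * hFun x := by
  constructor
  · have hsq : Real.sqrt t ≤ t := by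
      nlinarith [Real.sq_sqrt (by linarith : (0:ℝ) ≤ t), Real.sqrt_nonneg t,
        Real.sqrt_le_sqrt ht, Real.sqrt_one]
    calc Real.sqrt t * hFun x ≤ t * hFun x :=
          mul_le_mul_of_nonneg_right hsq (hFun_nonneg hx)
      _ ≤ hFun (t * x) := hFun_lower ht hx
  · exact hFun_upper ht hx
end

section
/- (Lemma 5.5, explicit form.) For all real p, q with 0 < p < q < 1/2, one has 0 ≤ H_p(q) − p·h(q/p − 1) ≤ 4·(p + q)·p·h(q/p − 1), where H_p(q) = q·log(q/p) + (1−q)·log((1−q)/(1−p)) is the Kullback–Leibler divergence between Bernoulli(p) and Bernoulli(q), and h(x) = (x+1)·log(x+1) − x. -/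
/-- The Kullback–Leibler divergence between `Bern(p)` and `Bern(q)`. -/
noncomputable def klBern (p q : ℝ) : ℝ :=
  q * Real.log (q / p) + (1 - q) * Real.log ((1 - q) / (1 - p))

lemma log_aux_lb {t : ℝ} (ht : 0 ≤ t) : t - t ^ 2 / 2 ≤ Real.log (1 + t) := by
  set f : ℝ → ℝ := fun x => Real.log (1 + x) - x + x ^ 2 / 2 with hfdef
  have hderiv : ∀ x : ℝ, 0 ≤ x → HasDerivAt f (x ^ 2 / (1 + x)) x := by
    intro x hx
    have hx0 : (0:ℝ) < 1 + x := by linarith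
    have h1 : HasDerivAt (fun x : ℝ => 1 + x) 1 x := by
      simpa using (hasDerivAt_id x).const_add 1
    have h2 : HasDerivAt (fun x : ℝ => Real.log (1 + x)) (1 * (1 + x)⁻¹) x :=
      h1.log (ne_of_gt hx0)
    have h3 : HasDerivAt f (1 * (1 + x)⁻¹ - 1 + (2 : ℕ) * x ^ (2 - 1) / 2) x :=
      ((h2.sub (hasDerivAt_id x)).add ((hasDerivAt_pow 2 x).div_const 2))
    convert h3 using 1
    field_simp
    ring
  have hmono : MonotoneOn f (Set.Ici 0) := by
    apply monotoneOn_of_hasDerivWithinAt_nonneg (convex_Ici 0)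
      (f' := fun x => x ^ 2 / (1 + x))
    · intro x hx
      exact (hderiv x hx).continuousAt.continuousWithinAt
    · intro x hx
      rw [interior_Ici] at hx
      exact ((hderiv x (le_of_lt hx)).hasDerivWithinAt)
    · intro x hx
      rw [interior_Ici] at hx
      have : (0:ℝ) < 1 + x := by linarith [hx.out]
      positivity
  have h0 : f 0 ≤ f t := hmono (Set.self_mem_Ici) ht ht
  simp only [hfdef, Real.log_one, add_zero, zero_pow, zero_div] at h0
  norm_num at h0
  linarith

lemma hFun_lb {u : ℝ} (hu : 0 ≤ u) : u ^ 2 / (2 * (1 + u)) ≤ hFun u := by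
  set f : ℝ → ℝ := fun x => hFun x - x ^ 2 / (2 * (1 + x)) with hfdef
  have hderiv : ∀ x : ℝ, 0 ≤ x →
      HasDerivAt f (Real.log (1 + x) - (x ^ 2 + 2 * x) / (2 * (1 + x) ^ 2)) x := by
    intro x hx
    have hx0 : (0:ℝ) < 1 + x := by linarith
    have h1 : HasDerivAt (fun x : ℝ => x + 1) 1 x := by
      simpa using (hasDerivAt_id x).add_const 1
    have h2 : HasDerivAt (fun x : ℝ => Real.log (x + 1)) (1 * (x + 1)⁻¹) x :=
      h1.log (by linarith)
    have h3 : HasDerivAt (fun x : ℝ => (x + 1) * Real.log (x + 1))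
        (1 * Real.log (x + 1) + (x + 1) * (1 * (x + 1)⁻¹)) x := h1.mul h2
    have h4 : HasDerivAt hFun
        (1 * Real.log (x + 1) + (x + 1) * (1 * (x + 1)⁻¹) - 1) x := by
      unfold hFun
      exact h3.sub (hasDerivAt_id x)
    have h5 : HasDerivAt (fun x : ℝ => x ^ 2 / (2 * (1 + x)))
        (((2:ℕ) * x ^ (2-1) * (2 * (1 + x)) - x ^ 2 * (2 * 1)) / (2 * (1 + x)) ^ 2) x := by
      apply HasDerivAt.div (hasDerivAt_pow 2 x)
      · exact (((hasDerivAt_id x).const_add 1).const_mul 2)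
      · positivity
    have h6 := h4.sub h5
    refine h6.congr_deriv ?_
    have hx1 : (x:ℝ) + 1 ≠ 0 := by linarith
    field_simp
    ring
  have hmono : MonotoneOn f (Set.Ici 0) := by
    apply monotoneOn_of_hasDerivWithinAt_nonneg (convex_Ici 0)
      (f' := fun x => Real.log (1 + x) - (x ^ 2 + 2 * x) / (2 * (1 + x) ^ 2))
    · intro x hx
      exact (hderiv x hx).continuousAt.continuousWithinAt
    · intro x hx
      rw [interior_Ici] at hx
      exact ((hderiv x (le_of_lt hx)).hasDerivWithinAt)
    · intro x hx
      rw [interior_Ici] at hx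
      have hx' : (0:ℝ) < x := hx
      have hx0 : (0:ℝ) < 1 + x := by linarith
      have hlog : x / (1 + x) ≤ Real.log (1 + x) := by
        have := Real.one_sub_inv_le_log_of_pos hx0
        have hinv : 1 - (1 + x)⁻¹ = x / (1 + x) := by field_simp; ring
        linarith [hinv ▸ this]
      have hquad : (x ^ 2 + 2 * x) / (2 * (1 + x) ^ 2) ≤ x / (1 + x) := by
        rw [div_le_div_iff₀ (by positivity) hx0]
        nlinarith
      linarith
  have h0 : f 0 ≤ f u := hmono (Set.self_mem_Ici) hu hu
  have hf0 : f 0 = 0 := by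
    simp [hfdef, hFun]
  rw [hf0] at h0
  simpa [hfdef, sub_nonneg] using h0

/-- **Lemma 5.5 (explicit form).** For `0 < p < q < 1/2`,
`0 ≤ H_p(q) - p·h(q/p - 1) ≤ 4(p+q)·p·h(q/p - 1)`. -/
theorem kl_poisson_approx (p q : ℝ) (hp : 0 < p) (hpq : p < q) (hq : q < 1/2) :
    0 ≤ klBern p q - p * hFun (q / p - 1) ∧
      klBern p q - p * hFun (q / p - 1) ≤ 4 * (p + q) * (p * hFun (q / p - 1)) := by
  have hq0 : 0 < q := hp.trans hpq
  have h1q : 0 < 1 - q := by linarith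
  have h1p : 0 < 1 - p := by linarith
  have hqp : 0 < q - p := by linarith
  set t : ℝ := (q - p) / (1 - q) with htdef
  have ht : 0 ≤ t := div_nonneg hqp.le h1q.le
  have ht1 : (1:ℝ) + t = (1 - p) / (1 - q) := by rw [htdef]; field_simp; ring
  -- key identity
  have hlog : Real.log ((1 - q) / (1 - p)) = - Real.log (1 + t) := by
    rw [ht1, ← Real.log_inv]
    congr 1
    field_simp
  have key : klBern p q - p * hFun (q / p - 1) = (1 - q) * (t - Real.log (1 + t)) := by
    unfold klBern hFun
    have h1 : q / p - 1 + 1 = q / p := by ring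
    rw [h1, hlog, htdef]
    field_simp
    ring
  -- lower bound
  have hlb : 0 ≤ t - Real.log (1 + t) := by
    have := Real.log_le_sub_one_of_pos (show (0:ℝ) < 1 + t by linarith)
    linarith
  constructor
  · rw [key]; positivity
  · -- upper bound on the difference
    have hub : klBern p q - p * hFun (q / p - 1) ≤ (q - p) ^ 2 / (2 * (1 - q)) := by
      rw [key]
      have h1 : t - Real.log (1 + t) ≤ t ^ 2 / 2 := by
        linarith [log_aux_lb ht]
      have h2 : (1 - q) * (t ^ 2 / 2) = (q - p) ^ 2 / (2 * (1 - q)) := by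
        rw [htdef]; field_simp
      calc (1 - q) * (t - Real.log (1 + t)) ≤ (1 - q) * (t ^ 2 / 2) := by
            exact mul_le_mul_of_nonneg_left h1 h1q.le
        _ = (q - p) ^ 2 / (2 * (1 - q)) := h2
    -- lower bound on p * hFun u
    set u : ℝ := q / p - 1 with hudef
    have hu : 0 ≤ u := by
      rw [hudef]
      have : (1:ℝ) ≤ q / p := (one_le_div hp).mpr hpq.le
      linarith
    have hplb : (q - p) ^ 2 / (2 * q) ≤ p * hFun u := by
      have h1 := hFun_lb hu
      have h2 : p * (u ^ 2 / (2 * (1 + u))) = (q - p) ^ 2 / (2 * q) := by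
        rw [hudef]
        have hp' : p ≠ 0 := ne_of_gt hp
        field_simp
        ring
      calc (q - p) ^ 2 / (2 * q) = p * (u ^ 2 / (2 * (1 + u))) := h2.symm
        _ ≤ p * hFun u := mul_le_mul_of_nonneg_left h1 hp.le
    -- combine
    have hmid : (q - p) ^ 2 / (2 * (1 - q)) ≤ 4 * (p + q) * ((q - p) ^ 2 / (2 * q)) := by
      rw [div_le_iff₀ (by positivity)]
      have hsq : 0 ≤ (q - p) ^ 2 := sq_nonneg _
      have h4 : q ≤ 4 * (p + q) * (1 - q) := by nlinarith
      calc (q - p) ^ 2 = (q - p) ^ 2 * 1 := by ring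
        _ ≤ 4 * (p + q) * ((q - p) ^ 2 / (2 * q)) * (2 * (1 - q)) := by
            rw [mul_one]
            have : 4 * (p + q) * ((q - p) ^ 2 / (2 * q)) * (2 * (1 - q))
                = (q - p) ^ 2 * (4 * (p + q) * (1 - q) / q) := by
              field_simp
            rw [this]
            apply le_mul_of_one_le_right hsq
            rw [le_div_iff₀ hq0]
            linarith
    have hfinal : 4 * (p + q) * ((q - p) ^ 2 / (2 * q)) ≤ 4 * (p + q) * (p * hFun u) := by
      apply mul_le_mul_of_nonneg_left hplb
      positivity
    linarith
end

section
/- (Binomial sum bound from the union-bound step of the scan test analysis.) Let n, r be integers with 1 ≤ r < n, and let δ > 0 be a real number with e·(r/n)^δ < 1. Then Σ_{k=1}^{r} binom(n,k)·(k/n)^{(1+δ)·k} ≤ e·(r/n)^δ / (1 − e·(r/n)^δ). -/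
/-!
Writing `x = e·(r/n)^δ`, the `k`-th term is at most `x^k`: split `(k/n)^{(1+δ)k}` as
`(k/n)^k · ((k/n)^δ)^k`, absorb `(k/n)^k` into `binom(n,k) ≤ (n·e/k)^k`, and bound
`(k/n)^δ ≤ (r/n)^δ`. The geometric series `Σ_{k ≥ 1} x^k = x/(1-x)` then finishes the proof.
-/

open Finset Real

lemma Nat.choose_mul_div_pow_le_exp_one_pow (n k : ℕ) :
    (n.choose k : ℝ) * ((k : ℝ) / n) ^ k ≤ exp 1 ^ k := by
  calc (n.choose k : ℝ) * ((k : ℝ) / n) ^ k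
      ≤ (n : ℝ) ^ k / k.factorial * ((k : ℝ) / n) ^ k := by
        gcongr
        exact Nat.choose_le_pow_div k n
    _ = ((n : ℝ) * (k / n)) ^ k / k.factorial := by ring
    _ ≤ (k : ℝ) ^ k / k.factorial := by
        gcongr
        -- `n · (k/n) = k`, except that it is `0` when `n = 0`
        rcases eq_or_ne (n : ℝ) 0 with hn | hn
        · simp [hn]
        · rw [mul_div_cancel₀ _ hn]
    _ ≤ exp k := Real.pow_div_factorial_le_exp _ k.cast_nonneg k
    _ = exp 1 ^ k := by rw [← exp_nat_mul, mul_one]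

lemma rpow_one_add_mul_natCast {x : ℝ} (hx : 0 ≤ x) {δ : ℝ} (hδ : 1 + δ ≠ 0) (k : ℕ) :
    x ^ ((1 + δ) * k) = x ^ k * (x ^ δ) ^ k := by
  rw [rpow_mul hx, rpow_natCast, rpow_add' hx hδ, rpow_one, mul_pow]

lemma choose_mul_div_rpow_le_pow {n k r : ℕ} (hkr : k ≤ r) {δ : ℝ} (hδ : 0 ≤ δ) :
    (n.choose k : ℝ) * ((k : ℝ) / n) ^ ((1 + δ) * k) ≤ (exp 1 * ((r : ℝ) / n) ^ δ) ^ k := by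
  rw [rpow_one_add_mul_natCast (by positivity) (by positivity), ← mul_assoc, mul_pow]
  gcongr
  exact Nat.choose_mul_div_pow_le_exp_one_pow n k

lemma sum_Icc_one_pow_le_div {x : ℝ} (hx₀ : 0 ≤ x) (hx₁ : x < 1) (r : ℕ) :
    ∑ k ∈ Icc 1 r, x ^ k ≤ x / (1 - x) := by
  simpa [Ico_add_one_right_eq_Icc] using geom_sum_Ico_le_of_lt_one (m := 1) (n := r + 1) hx₀ hx₁

theorem binomial_sum_bound_general (n r : ℕ)
    (δ : ℝ) (hδ : 0 < δ)
    (hkey : Real.exp 1 * ((r : ℝ) / (n : ℝ)) ^ δ < 1) :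
    ∑ k ∈ Finset.Icc 1 r, (n.choose k : ℝ) * ((k : ℝ) / (n : ℝ)) ^ ((1 + δ) * (k : ℝ)) ≤
      Real.exp 1 * ((r : ℝ) / (n : ℝ)) ^ δ / (1 - Real.exp 1 * ((r : ℝ) / (n : ℝ)) ^ δ) := by
  calc _ ≤ ∑ k ∈ Icc 1 r, (exp 1 * ((r : ℝ) / n) ^ δ) ^ k :=
        sum_le_sum fun k hk => choose_mul_div_rpow_le_pow (mem_Icc.mp hk).2 hδ.le
    _ ≤ _ := sum_Icc_one_pow_le_div (by positivity) hkey r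

/-- **Binomial sum bound** from the union-bound step of the scan test analysis:
for `1 ≤ r < n` and `δ > 0` with `e·(r/n)^δ < 1`,
`Σ_{k=1}^r C(n,k)·(k/n)^{(1+δ)k} ≤ e·(r/n)^δ / (1 - e·(r/n)^δ)`. -/
theorem binomial_sum_bound (n r : ℕ) (hr1 : 1 ≤ r) (hrn : r < n)
    (δ : ℝ) (hδ : 0 < δ)
    (hkey : Real.exp 1 * ((r : ℝ) / (n : ℝ)) ^ δ < 1) :
    ∑ k ∈ Finset.Icc 1 r, (n.choose k : ℝ) * ((k : ℝ) / (n : ℝ)) ^ ((1 + δ) * (k : ℝ)) ≤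
      Real.exp 1 * ((r : ℝ) / (n : ℝ)) ^ δ / (1 - Real.exp 1 * ((r : ℝ) / (n : ℝ)) ^ δ) :=
  binomial_sum_bound_general n r δ hδ hkey
end

section
/- (Finite-n type-I error bound for the known-probability scan statistic, from the proof of Theorem 2.) Let V be a set with |V| = n ≥ 2, let p_{ij} ∈ [0,1] (i ≠ j ∈ V, symmetric), and let the edge indicators A_{ij}, i < j, be independent with A_{ij} ~ Bernoulli(p_{ij}). For D ⊆ V set e(D) = Σ_{i<j∈D} A_{ij} and E[e(D)] = Σ_{i<j∈D} p_{ij}. For nonempty D ⊆ V define Ψ_D = E[e(D)]·h(max(e(D)/E[e(D)] − 1, 0))/(|D|·log(n/|D|)) if E[e(D)] > 0 and Ψ_D = 0 otherwise. Let r be an integer with 1 ≤ r < n and let δ > 0 satisfy e·(r/n)^δ < 1. Then P( max over nonempty D ⊆ V with |D| ≤ r of Ψ_D ≥ 1 + δ ) ≤ e·(r/n)^δ / (1 − e·(r/n)^δ). -/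
open Finset

namespace ScanTypeI

/-- Potential edges of a graph on `Fin n`: ordered pairs `i < j` of vertices. -/
abbrev Edge (n : ℕ) := {q : Fin n × Fin n // q.1 < q.2}

/-- A realization of the random graph. -/
abbrev Config (n : ℕ) := Edge n → Bool

/-- Probability of the event `E` when the edge indicators are independent Bernoulli
random variables with parameters `w`. -/
noncomputable def prob (n : ℕ) (w : Edge n → ℝ) (E : Set (Config n)) : ℝ :=
  ∑ a : Config n, E.indicator (fun a => ∏ e : Edge n, (if a e then w e else 1 - w e)) a

/-- Edge parameters induced by `p`. -/
def nullW (n : ℕ) (p : Fin n → Fin n → ℝ) : Edge n → ℝ := fun e => p e.1.1 e.1.2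

/-- The number of edges `e(D)` inside `D`. -/
def eCount (n : ℕ) (D : Finset (Fin n)) (a : Config n) : ℝ :=
  ∑ e : Edge n, if e.1.1 ∈ D ∧ e.1.2 ∈ D ∧ a e = true then 1 else 0

/-- The expected number of edges `E[e(D)]` inside `D`. -/
def expCount (n : ℕ) (p : Fin n → Fin n → ℝ) (D : Finset (Fin n)) : ℝ :=
  ∑ e : Edge n, if e.1.1 ∈ D ∧ e.1.2 ∈ D then p e.1.1 e.1.2 else 0

/-- The entropy function `h(x) = (x+1)log(x+1) - x`. -/
noncomputable def hFun (x : ℝ) : ℝ := (x + 1) * Real.log (x + 1) - x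

/-- The known-probability scan statistic `Ψ_D`. -/
noncomputable def scanStat (n : ℕ) (p : Fin n → Fin n → ℝ) (D : Finset (Fin n))
    (a : Config n) : ℝ :=
  if 0 < expCount n p D then
    expCount n p D * hFun (max (eCount n D a / expCount n p D - 1) 0) /
      ((D.card : ℝ) * Real.log ((n : ℝ) / (D.card : ℝ)))
  else 0

/-! ### Auxiliary lemmas -/

lemma weight_nonneg {n : ℕ} {w : Edge n → ℝ} (hw : ∀ e : Edge n, w e ∈ Set.Icc (0:ℝ) 1)
    (a : Config n) : 0 ≤ ∏ e : Edge n, (if a e then w e else 1 - w e) := by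
  apply Finset.prod_nonneg
  intro e _
  rcases (hw e) with ⟨h0, h1⟩
  by_cases h : a e <;> simp [h] <;> linarith

lemma indicator_nonneg' {n : ℕ} {w : Edge n → ℝ} (hw : ∀ e : Edge n, w e ∈ Set.Icc (0:ℝ) 1)
    (E : Set (Config n)) (a : Config n) :
    0 ≤ E.indicator (fun a => ∏ e : Edge n, (if a e then w e else 1 - w e)) a := by
  apply Set.indicator_nonneg
  intro b _
  exact weight_nonneg hw b

lemma prob_le_sum {n : ℕ} {w : Edge n → ℝ} (hw : ∀ e : Edge n, w e ∈ Set.Icc (0:ℝ) 1)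
    {ι : Type*} [DecidableEq ι] (s : Finset ι) (E : ι → Set (Config n)) (F : Set (Config n))
    (hF : ∀ a ∈ F, ∃ i ∈ s, a ∈ E i) :
    prob n w F ≤ ∑ i ∈ s, prob n w (E i) := by
  unfold prob
  rw [Finset.sum_comm]
  apply Finset.sum_le_sum
  intro a _
  by_cases ha : a ∈ F
  · obtain ⟨i, his, hai⟩ := hF a ha
    rw [Set.indicator_of_mem ha]
    calc (∏ e : Edge n, if a e then w e else 1 - w e)
        = (E i).indicator (fun a => ∏ e : Edge n, (if a e then w e else 1 - w e)) a := by
          rw [Set.indicator_of_mem hai]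
      _ ≤ ∑ j ∈ s, (E j).indicator (fun a => ∏ e : Edge n, (if a e then w e else 1 - w e)) a :=
          Finset.single_le_sum (fun j _ => indicator_nonneg' hw (E j) a) his
  · rw [Set.indicator_of_notMem ha]
    exact Finset.sum_nonneg fun j _ => indicator_nonneg' hw (E j) a

lemma prob_mono {n : ℕ} {w : Edge n → ℝ} (hw : ∀ e : Edge n, w e ∈ Set.Icc (0:ℝ) 1)
    {E F : Set (Config n)} (h : E ⊆ F) : prob n w E ≤ prob n w F :=
  Finset.sum_le_sum fun a _ =>
    Set.indicator_le_indicator_of_subset h (fun b => weight_nonneg hw b) a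

lemma sum_config {n : ℕ} (f : Edge n → Bool → ℝ) :
    ∑ a : Config n, ∏ e : Edge n, f e (a e) = ∏ e : Edge n, (f e true + f e false) := by
  rw [← Fintype.prod_sum f]
  congr 1
  ext e
  simp

lemma nullW_mem {n : ℕ} {p : Fin n → Fin n → ℝ}
    (hp : ∀ i j : Fin n, i ≠ j → p i j ∈ Set.Icc (0 : ℝ) 1) (e : Edge n) :
    nullW n p e ∈ Set.Icc (0:ℝ) 1 :=
  hp _ _ (ne_of_lt e.2)

lemma expCount_le {n : ℕ} {p : Fin n → Fin n → ℝ}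
    (hp : ∀ i j : Fin n, i ≠ j → p i j ∈ Set.Icc (0 : ℝ) 1) (D : Finset (Fin n)) :
    True := trivial

/-- Chernoff bound for the edge count. -/
lemma chernoff {n : ℕ} {p : Fin n → Fin n → ℝ}
    (hp : ∀ i j : Fin n, i ≠ j → p i j ∈ Set.Icc (0 : ℝ) 1)
    (D : Finset (Fin n)) (lam t : ℝ) (hlam : 0 ≤ lam) :
    prob n (nullW n p) {a | t ≤ eCount n D a} ≤
      Real.exp (expCount n p D * (Real.exp lam - 1) - lam * t) := by
  classical
  have hw := nullW_mem hp
  set w := nullW n p with hwdef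
  set F : Edge n → Bool → ℝ := fun e b =>
    (if b then w e else 1 - w e) *
      Real.exp (lam * (if e.1.1 ∈ D ∧ e.1.2 ∈ D ∧ b = true then 1 else 0)) with hF
  have step1 : ∀ a : Config n,
      ({a | t ≤ eCount n D a} : Set (Config n)).indicator
        (fun a => ∏ e : Edge n, (if a e then w e else 1 - w e)) a ≤
      Real.exp (lam * (eCount n D a - t)) * ∏ e : Edge n, (if a e then w e else 1 - w e) := by
    intro a
    by_cases ha : a ∈ ({a | t ≤ eCount n D a} : Set (Config n))
    · rw [Set.indicator_of_mem ha]
      have ht : t ≤ eCount n D a := ha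
      have h1 : (1:ℝ) ≤ Real.exp (lam * (eCount n D a - t)) :=
        Real.one_le_exp (by nlinarith)
      nlinarith [weight_nonneg hw a]
    · rw [Set.indicator_of_notMem ha]
      exact mul_nonneg (Real.exp_pos _).le (weight_nonneg hw a)
  have step2 : ∀ a : Config n,
      Real.exp (lam * (eCount n D a - t)) * ∏ e : Edge n, (if a e then w e else 1 - w e)
      = Real.exp (-(lam * t)) * ∏ e : Edge n, F e (a e) := by
    intro a
    have h1 : lam * (eCount n D a - t) =
        (∑ e : Edge n, lam * (if e.1.1 ∈ D ∧ e.1.2 ∈ D ∧ a e = true then 1 else 0))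
          + (-(lam * t)) := by
      rw [eCount, mul_sub, Finset.mul_sum]; ring
    calc Real.exp (lam * (eCount n D a - t)) * ∏ e : Edge n, (if a e then w e else 1 - w e)
        = Real.exp (-(lam * t)) *
            ((∏ e : Edge n, (if a e then w e else 1 - w e)) *
              ∏ e : Edge n,
                Real.exp (lam * (if e.1.1 ∈ D ∧ e.1.2 ∈ D ∧ a e = true then 1 else 0))) := by
          rw [h1, Real.exp_add, Real.exp_sum]; ring
      _ = Real.exp (-(lam * t)) * ∏ e : Edge n, F e (a e) := by
          rw [hF, ← Finset.prod_mul_distrib]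
  have step3 :
      ∑ a : Config n, ∏ e : Edge n, F e (a e) = ∏ e : Edge n, (F e true + F e false) :=
    sum_config F
  have step4 : ∀ e : Edge n, F e true + F e false ≤
      Real.exp (if e.1.1 ∈ D ∧ e.1.2 ∈ D then w e * (Real.exp lam - 1) else 0) := by
    intro e
    rcases hw e with ⟨h0, h1⟩
    by_cases hD : e.1.1 ∈ D ∧ e.1.2 ∈ D
    · simp only [hF, hD, if_pos, if_neg, and_true, and_false]
      simp [hD]
      have := Real.add_one_le_exp (w e * (Real.exp lam - 1))
      nlinarith
    · simp only [hF]
      simp [hD]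
  have step5 : ∀ e : Edge n, 0 ≤ F e true + F e false := by
    intro e
    rcases hw e with ⟨h0, h1⟩
    have e1 : 0 ≤ F e true := by
      simp only [hF]
      exact mul_nonneg (by simpa using h0) (Real.exp_pos _).le
    have e2 : 0 ≤ F e false := by
      simp only [hF]
      refine mul_nonneg ?_ (Real.exp_pos _).le
      simp only [if_neg (by simp : ¬(false = true))]
      linarith
    linarith
  have step6 : ∏ e : Edge n, (F e true + F e false) ≤
      Real.exp (expCount n p D * (Real.exp lam - 1)) := by
    calc ∏ e : Edge n, (F e true + F e false)
        ≤ ∏ e : Edge n,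
            Real.exp (if e.1.1 ∈ D ∧ e.1.2 ∈ D then w e * (Real.exp lam - 1) else 0) :=
          Finset.prod_le_prod (fun e _ => step5 e) (fun e _ => step4 e)
      _ = Real.exp (∑ e : Edge n,
            (if e.1.1 ∈ D ∧ e.1.2 ∈ D then w e * (Real.exp lam - 1) else 0)) :=
          (Real.exp_sum _ _).symm
      _ = Real.exp (expCount n p D * (Real.exp lam - 1)) := by
          congr 1
          rw [expCount, Finset.sum_mul]
          refine Finset.sum_congr rfl fun e _ => ?_
          by_cases hD : e.1.1 ∈ D ∧ e.1.2 ∈ D <;> simp [hD, hwdef, nullW]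
  calc prob n w {a | t ≤ eCount n D a}
      ≤ ∑ a : Config n,
          Real.exp (lam * (eCount n D a - t)) * ∏ e : Edge n, (if a e then w e else 1 - w e) :=
        Finset.sum_le_sum (fun a _ => step1 a)
    _ = Real.exp (-(lam * t)) * ∑ a : Config n, ∏ e : Edge n, F e (a e) := by
        rw [Finset.mul_sum]; exact Finset.sum_congr rfl fun a _ => step2 a
    _ ≤ Real.exp (-(lam * t)) * Real.exp (expCount n p D * (Real.exp lam - 1)) := by
        rw [step3]
        exact mul_le_mul_of_nonneg_left step6 (le_of_lt (Real.exp_pos _))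
    _ = Real.exp (expCount n p D * (Real.exp lam - 1) - lam * t) := by
        rw [← Real.exp_add]; ring_nf

lemma hFun_continuous : Continuous hFun := by
  have h1 : Continuous fun x : ℝ => (x + 1) * Real.log (x + 1) :=
    Real.continuous_mul_log.comp (continuous_id.add continuous_const)
  exact h1.sub continuous_id

lemma hFun_hasDeriv {x : ℝ} (hx : 0 < x + 1) :
    HasDerivAt hFun (Real.log (x + 1)) x := by
  have h1 : HasDerivAt (fun y : ℝ => y + 1) 1 x := (hasDerivAt_id x).add_const 1
  have h2 : HasDerivAt (fun y : ℝ => Real.log (y + 1)) (1 / (x + 1)) x := by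
    simpa [Function.comp_def] using (Real.hasDerivAt_log (ne_of_gt hx)).comp x h1
  have h3 : HasDerivAt (fun y : ℝ => (y + 1) * Real.log (y + 1))
      (1 * Real.log (x + 1) + (x + 1) * (1 / (x + 1))) x := h1.mul h2
  have h4 := h3.sub (hasDerivAt_id x)
  exact h4.congr_deriv (by rw [mul_one_div_cancel (ne_of_gt hx)]; ring)

lemma hFun_strictMonoOn : StrictMonoOn hFun (Set.Ici (0:ℝ)) := by
  apply strictMonoOn_of_deriv_pos (convex_Ici 0) hFun_continuous.continuousOn
  intro x hx
  rw [interior_Ici] at hx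
  have hx1 : (0:ℝ) < x + 1 := by simp at hx; linarith
  rw [(hFun_hasDeriv hx1).deriv]
  exact Real.log_pos (by simp at hx; linarith)

lemma hFun_zero : hFun 0 = 0 := by simp [hFun]

lemma hFun_exists (c : ℝ) (hc : 0 ≤ c) : ∃ x, 0 ≤ x ∧ hFun x = c := by
  set B : ℝ := Real.exp (c + 1) - 1 with hB
  have hB0 : 0 ≤ B := by
    have : (1:ℝ) ≤ Real.exp (c + 1) := Real.one_le_exp (by linarith)
    simp only [hB]; linarith
  have hBval : hFun B = c * Real.exp (c + 1) + 1 := by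
    simp only [hFun, hB]
    rw [show Real.exp (c+1) - 1 + 1 = Real.exp (c+1) by ring, Real.log_exp]
    ring
  have hcB : c ∈ Set.Icc (hFun 0) (hFun B) := by
    constructor
    · rw [hFun_zero]; exact hc
    · rw [hBval]
      have h1 : (1:ℝ) ≤ Real.exp (c + 1) := Real.one_le_exp (by linarith)
      nlinarith
  obtain ⟨x, hx, hxc⟩ := intermediate_value_Icc hB0 hFun_continuous.continuousOn hcB
  exact ⟨x, hx.1, hxc⟩

/-- Tail bound for a single `D`. -/
lemma tail_bound {n : ℕ} {p : Fin n → Fin n → ℝ}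
    (hp : ∀ i j : Fin n, i ≠ j → p i j ∈ Set.Icc (0 : ℝ) 1)
    (D : Finset (Fin n)) (hD : D.Nonempty) (hDn : D.card < n)
    (δ : ℝ) (hδ : 0 < δ) :
    prob n (nullW n p) {a | 1 + δ ≤ scanStat n p D a} ≤
      ((D.card : ℝ) / n) ^ ((1 + δ) * D.card) := by
  classical
  set k : ℝ := (D.card : ℝ) with hk
  have hk0 : 0 < k := by rw [hk]; exact_mod_cast Finset.card_pos.2 hD
  have hkn : k < (n : ℝ) := by rw [hk]; exact_mod_cast hDn
  have hn0 : (0:ℝ) < n := lt_trans hk0 hkn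
  set L : ℝ := Real.log ((n : ℝ) / k) with hLdef
  have hL : 0 < L := Real.log_pos (by rw [lt_div_iff₀ hk0]; linarith)
  have hRHSeq : ((D.card : ℝ) / n) ^ ((1 + δ) * D.card) = Real.exp (-((1 + δ) * (k * L))) := by
    rw [Real.rpow_def_of_pos (div_pos hk0 hn0)]
    congr 1
    rw [Real.log_div (ne_of_gt hk0) (ne_of_gt hn0), hLdef,
      Real.log_div (ne_of_gt hn0) (ne_of_gt hk0)]
    push_cast
    ring
  by_cases hE : 0 < expCount n p D
  · set E := expCount n p D with hEdef
    set s : ℝ := (1 + δ) * (k * L) with hsdef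
    have hs : 0 < s := by
      have := mul_pos hk0 hL
      have h1 : (0:ℝ) < 1 + δ := by linarith
      exact mul_pos h1 this
    obtain ⟨x, hx0, hxc⟩ := hFun_exists (s / E) (le_of_lt (div_pos hs hE))
    have hxpos : 0 < x := by
      rcases eq_or_lt_of_le hx0 with h | h
    
      · exfalso
        rw [← h, hFun_zero] at hxc
        have := div_pos hs hE
        linarith
      · exact h
    have hsub : {a : Config n | 1 + δ ≤ scanStat n p D a} ⊆
        {a : Config n | E * (1 + x) ≤ eCount n D a} := by
      intro a ha
      simp only [Set.mem_setOf_eq] at ha ⊢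
      rw [scanStat, if_pos hE] at ha
      set m := max (eCount n D a / E - 1) 0 with hm
      have hm0 : (0:ℝ) ≤ m := le_max_right _ _
      have hkL : 0 < k * L := mul_pos hk0 hL
      have h2 : s ≤ E * hFun m := by
        rw [le_div_iff₀ hkL] at ha
      
        calc s = (1 + δ) * (k * L) := hsdef
          _ ≤ E * hFun m := ha
      have h3 : hFun x ≤ hFun m := by
        rw [hxc, div_le_iff₀ hE]
        linarith [h2]
      have h4 : x ≤ m := by
        by_contra hlt
        push_neg at hlt
        have := hFun_strictMonoOn (Set.mem_Ici.2 hm0) (Set.mem_Ici.2 hx0) hlt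
        linarith
      have h5 : x ≤ eCount n D a / E - 1 := by
        rcases le_or_gt (eCount n D a / E - 1) 0 with hcase | hcase
        · rw [hm, max_eq_right hcase] at h4; linarith
        · rwa [hm, max_eq_left hcase.le] at h4
      have h6 : 1 + x ≤ eCount n D a / E := by linarith
      calc E * (1 + x) ≤ E * (eCount n D a / E) :=
            mul_le_mul_of_nonneg_left h6 hE.le
        _ = eCount n D a := by field_simp
    have hch := chernoff hp D (Real.log (1 + x)) (E * (1 + x))
      (Real.log_nonneg (by linarith))
    have hexp : Real.exp (Real.log (1 + x)) = 1 + x := Real.exp_log (by linarith)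
    calc prob n (nullW n p) {a | 1 + δ ≤ scanStat n p D a}
        ≤ prob n (nullW n p) {a | E * (1 + x) ≤ eCount n D a} :=
          prob_mono (nullW_mem hp) hsub
      _ ≤ Real.exp (E * (Real.exp (Real.log (1 + x)) - 1) -
            Real.log (1 + x) * (E * (1 + x))) := hch
      _ = Real.exp (-(E * hFun x)) := by
          congr 1
          rw [hexp, hFun]
          ring
      _ = Real.exp (-s) := by
          rw [hxc, mul_div_cancel₀ _ (ne_of_gt hE)]
      _ = ((D.card : ℝ) / n) ^ ((1 + δ) * D.card) := by rw [hRHSeq]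
  · have hempty : {a : Config n | 1 + δ ≤ scanStat n p D a} = ∅ := by
      rw [Set.eq_empty_iff_forall_notMem]
      intro a ha
      simp only [Set.mem_setOf_eq, scanStat, if_neg hE] at ha
      linarith
    rw [hempty]
    have hzero : prob n (nullW n p) (∅ : Set (Config n)) = 0 := by simp [prob]
    rw [hzero]
    apply Real.rpow_nonneg
    positivity

/-- Counting bound: `C(n,k) (k/n)^{(1+δ)k} ≤ (e (r/n)^δ)^k`. -/
lemma count_bound (n r k : ℕ) (hk1 : 1 ≤ k) (hkr : k ≤ r) (hrn : r < n)
    (δ : ℝ) (hδ : 0 < δ) :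
    (n.choose k : ℝ) * ((k : ℝ) / n) ^ ((1 + δ) * k) ≤
      (Real.exp 1 * ((r : ℝ) / n) ^ δ) ^ k := by
  have hn0 : (0:ℝ) < n := by
    have : 0 < n := by omega
    exact_mod_cast this
  have hk0 : (0:ℝ) < k := by exact_mod_cast hk1
  have hb0 : (0:ℝ) < (k : ℝ) / n := div_pos hk0 hn0
  have hb1 : (k : ℝ) / n ≤ (r : ℝ) / n := by
    have hkr' : (k:ℝ) ≤ (r:ℝ) := by exact_mod_cast hkr
    gcongr
  have hsplit : ((k : ℝ) / n) ^ ((1 + δ) * k) =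
      ((k : ℝ) / n) ^ k * (((k : ℝ) / n) ^ δ) ^ k := by
    rw [show (1 + δ) * (k:ℝ) = (k:ℝ) + δ * (k:ℝ) by ring, Real.rpow_add hb0,
      Real.rpow_natCast, Real.rpow_mul hb0.le, Real.rpow_natCast]
  have hfac : (0:ℝ) < (Nat.factorial k : ℝ) := by exact_mod_cast Nat.factorial_pos k
  have hchoose : (n.choose k : ℝ) * (Nat.factorial k : ℝ) ≤ (n : ℝ) ^ k := by
    have h := Nat.descFactorial_le_pow n k
    rw [Nat.descFactorial_eq_factorial_mul_choose] at h
    have : ((Nat.factorial k * n.choose k : ℕ) : ℝ) ≤ ((n ^ k : ℕ) : ℝ) := by exact_mod_cast h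
    push_cast at this
    linarith
  have hkk : ((k : ℝ)) ^ k ≤ Real.exp 1 ^ k * (Nat.factorial k : ℝ) := by
    have h1 : ((k:ℝ)) ^ k / (Nat.factorial k : ℝ) ≤ Real.exp (k : ℝ) := by
      calc ((k:ℝ)) ^ k / (Nat.factorial k : ℝ)
          ≤ ∑ i ∈ Finset.range (k + 1), (k:ℝ) ^ i / (Nat.factorial i : ℝ) := by
            apply Finset.single_le_sum (f := fun i => (k:ℝ) ^ i / (Nat.factorial i : ℝ))
              (fun i _ => by positivity) (Finset.self_mem_range_succ k)
        _ ≤ Real.exp (k : ℝ) := Real.sum_le_exp_of_nonneg hk0.le _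
    have h2 : Real.exp (k : ℝ) = Real.exp 1 ^ k := by
      rw [show ((k:ℕ):ℝ) = (k:ℕ) * (1:ℝ) by ring, Real.exp_nat_mul]
    rw [div_le_iff₀ hfac] at h1
    rw [← h2]
    linarith
  have hA : (n.choose k : ℝ) * ((k : ℝ) / n) ^ k ≤ Real.exp 1 ^ k := by
    have hc0 : (0:ℝ) ≤ (n.choose k : ℝ) := Nat.cast_nonneg _
    have key : (n.choose k : ℝ) * (k : ℝ) ^ k ≤ Real.exp 1 ^ k * (n : ℝ) ^ k := by
      calc (n.choose k : ℝ) * (k : ℝ) ^ k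
          ≤ (n.choose k : ℝ) * (Real.exp 1 ^ k * (Nat.factorial k : ℝ)) :=
            mul_le_mul_of_nonneg_left hkk hc0
        _ = Real.exp 1 ^ k * ((n.choose k : ℝ) * (Nat.factorial k : ℝ)) := by ring
        _ ≤ Real.exp 1 ^ k * (n : ℝ) ^ k :=
            mul_le_mul_of_nonneg_left hchoose (by positivity)
    rw [div_pow]
    rw [mul_div_assoc', div_le_iff₀ (by positivity)]
    linarith
  have hB : (((k : ℝ) / n) ^ δ) ^ k ≤ (((r : ℝ) / n) ^ δ) ^ k :=
    pow_le_pow_left₀ (Real.rpow_nonneg hb0.le δ)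
      (Real.rpow_le_rpow hb0.le hb1 hδ.le) k
  calc (n.choose k : ℝ) * ((k : ℝ) / n) ^ ((1 + δ) * k)
      = ((n.choose k : ℝ) * ((k : ℝ) / n) ^ k) * (((k : ℝ) / n) ^ δ) ^ k := by
        rw [hsplit]; ring
    _ ≤ Real.exp 1 ^ k * (((r : ℝ) / n) ^ δ) ^ k := by
        apply mul_le_mul hA hB (by positivity) (by positivity)
    _ = (Real.exp 1 * ((r : ℝ) / n) ^ δ) ^ k := (mul_pow _ _ _).symm

lemma geom_bound (q : ℝ) (hq0 : 0 ≤ q) (hq1 : q < 1) (r : ℕ) :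
    ∑ k ∈ Finset.Icc 1 r, q ^ k ≤ q / (1 - q) := by
  have h1q : 0 < 1 - q := by linarith
  have hgs : ∑ j ∈ Finset.range r, q ^ j ≤ 1 / (1 - q) := by
    rw [geom_sum_eq (ne_of_lt hq1) r]
    have heq : (q ^ r - 1) / (q - 1) = (1 - q ^ r) / (1 - q) := by
      rw [← neg_div_neg_eq]; ring_nf
    rw [heq, div_le_div_iff₀ h1q h1q]
    have : (0:ℝ) ≤ q ^ r := pow_nonneg hq0 r
    nlinarith
  have hshift : ∑ k ∈ Finset.Icc 1 r, q ^ k = q * ∑ j ∈ Finset.range r, q ^ j := by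
    rw [Finset.mul_sum, ← Finset.Ico_add_one_right_eq_Icc, Finset.sum_Ico_eq_sum_range]
    exact Finset.sum_congr (by norm_num) fun j _ => by rw [pow_add, pow_one]
  rw [hshift]
  calc q * ∑ j ∈ Finset.range r, q ^ j ≤ q * (1 / (1 - q)) :=
        mul_le_mul_of_nonneg_left hgs hq0
    _ = q / (1 - q) := by ring

/-- **Finite-`n` type-I error bound for the known-probability scan statistic** (from the
proof of Theorem 2): if `e·(r/n)^δ < 1`, then
`P(max_{∅ ≠ D, |D| ≤ r} Ψ_D ≥ 1 + δ) ≤ e·(r/n)^δ / (1 - e·(r/n)^δ)`. -/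
theorem scan_typeI_bound (n : ℕ) (hn : 2 ≤ n) (p : Fin n → Fin n → ℝ)
    (hp : ∀ i j : Fin n, i ≠ j → p i j ∈ Set.Icc (0 : ℝ) 1)
    (hsymm : ∀ i j : Fin n, p i j = p j i)
    (r : ℕ) (hr1 : 1 ≤ r) (hrn : r < n)
    (δ : ℝ) (hδ : 0 < δ)
    (hkey : Real.exp 1 * ((r : ℝ) / (n : ℝ)) ^ δ < 1) :
    prob n (nullW n p)
      {a | 1 + δ ≤ sSup {x | ∃ D : Finset (Fin n),
        D.Nonempty ∧ D.card ≤ r ∧ x = scanStat n p D a}} ≤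
      Real.exp 1 * ((r : ℝ) / (n : ℝ)) ^ δ / (1 - Real.exp 1 * ((r : ℝ) / (n : ℝ)) ^ δ) := by
  classical
  have hw := nullW_mem hp
  set q : ℝ := Real.exp 1 * ((r : ℝ) / (n : ℝ)) ^ δ with hq
  have hq0 : 0 ≤ q := by
    apply mul_nonneg (Real.exp_pos 1).le
    apply Real.rpow_nonneg
    positivity
  set s : Finset (Finset (Fin n)) :=
    (Finset.Icc 1 r).biUnion
      (fun k => Finset.powersetCard k (Finset.univ : Finset (Fin n))) with hsdef
  set Ev : Finset (Fin n) → Set (Config n) :=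
    fun D => {a | 1 + δ ≤ scanStat n p D a} with hEv
  have hcover : ∀ a ∈ ({a | 1 + δ ≤ sSup {x | ∃ D : Finset (Fin n),
      D.Nonempty ∧ D.card ≤ r ∧ x = scanStat n p D a}} : Set (Config n)),
      ∃ D ∈ s, a ∈ Ev D := by
    intro a ha
    simp only [Set.mem_setOf_eq] at ha
    set S := {x | ∃ D : Finset (Fin n), D.Nonempty ∧ D.card ≤ r ∧ x = scanStat n p D a}
      with hS
    have hfin : S.Finite := by
      apply Set.Finite.subset (Set.finite_range (fun D => scanStat n p D a))
      rintro x ⟨D, _, _, rfl⟩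
      exact ⟨D, rfl⟩
    have hne : S.Nonempty := by
      refine ⟨scanStat n p {(⟨0, by omega⟩ : Fin n)} a,
        ⟨{(⟨0, by omega⟩ : Fin n)}, Finset.singleton_nonempty _, ?_, rfl⟩⟩
      rw [Finset.card_singleton]
      exact hr1
    obtain ⟨D, hDne, hDr, hDval⟩ := Set.Nonempty.csSup_mem hne hfin
    refine ⟨D, ?_, ?_⟩
    · rw [hsdef, Finset.mem_biUnion]
      refine ⟨D.card, Finset.mem_Icc.2 ⟨Finset.card_pos.2 hDne, hDr⟩,
        Finset.mem_powersetCard.2 ⟨Finset.subset_univ D, rfl⟩⟩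
    · show 1 + δ ≤ scanStat n p D a
      rw [← hDval]
      exact ha
  have step1 := prob_le_sum hw s Ev _ hcover
  have hdisj : (↑(Finset.Icc 1 r) : Set ℕ).PairwiseDisjoint
      (fun k => Finset.powersetCard k (Finset.univ : Finset (Fin n))) := by
    intro i _ j _ hij
    apply Finset.disjoint_left.2
    intro D hDi hDj
    exact hij ((Finset.mem_powersetCard.1 hDi).2.symm.trans (Finset.mem_powersetCard.1 hDj).2)
  have step2 : ∑ D ∈ s, prob n (nullW n p) (Ev D) =
      ∑ k ∈ Finset.Icc 1 r, ∑ D ∈ Finset.powersetCard k (Finset.univ : Finset (Fin n)),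
        prob n (nullW n p) (Ev D) := by
    rw [hsdef]
    exact Finset.sum_biUnion hdisj
  have step3 : ∀ k ∈ Finset.Icc 1 r,
      ∑ D ∈ Finset.powersetCard k (Finset.univ : Finset (Fin n)),
        prob n (nullW n p) (Ev D) ≤ q ^ k := by
    intro k hk
    obtain ⟨hk1, hkr⟩ := Finset.mem_Icc.1 hk
    calc ∑ D ∈ Finset.powersetCard k (Finset.univ : Finset (Fin n)),
          prob n (nullW n p) (Ev D)
        ≤ ∑ D ∈ Finset.powersetCard k (Finset.univ : Finset (Fin n)),
            ((k : ℝ) / n) ^ ((1 + δ) * k) := by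
          apply Finset.sum_le_sum
          intro D hD
          have hcard : D.card = k := (Finset.mem_powersetCard.1 hD).2
          have hDne : D.Nonempty := Finset.card_pos.1 (by omega)
          have hDn : D.card < n := by omega
          have := tail_bound hp D hDne hDn δ hδ
          rwa [hcard] at this
      _ = ((n.choose k : ℝ)) * ((k : ℝ) / n) ^ ((1 + δ) * k) := by
          rw [Finset.sum_const, Finset.card_powersetCard, Finset.card_univ,
            Fintype.card_fin, nsmul_eq_mul]
      _ ≤ q ^ k := count_bound n r k hk1 hkr hrn δ hδ
  calc prob n (nullW n p) ({a | 1 + δ ≤ sSup {x | ∃ D : Finset (Fin n),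
          D.Nonempty ∧ D.card ≤ r ∧ x = scanStat n p D a}} : Set (Config n))
      ≤ ∑ D ∈ s, prob n (nullW n p) (Ev D) := step1
    _ = ∑ k ∈ Finset.Icc 1 r, ∑ D ∈ Finset.powersetCard k (Finset.univ : Finset (Fin n)),
        prob n (nullW n p) (Ev D) := step2
    _ ≤ ∑ k ∈ Finset.Icc 1 r, q ^ k := Finset.sum_le_sum step3
    _ ≤ q / (1 - q) := geom_bound q hq0 hkey r

end ScanTypeI
end
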